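/- For every dyadic rational x ∈ (0,1) (i.e. x = k/2^n for some integers k, n with 0 < x < 1), the level set L(T(x)) = {x' ∈ [0,1] : T(x') = T(x)} is an infinite set. -/

import Mathlib

/-!
Write the dyadic `x ∈ (0, 1)` as the midpoint `(q + 1/2) / 2^m` of a dyadic interval. On that
interval `T` is an affine function with integer coefficients plus `T` rescaled by `2^(-m)`, so
`T (x ± u / 2^(m+1)) - T x = (T u - (1 ∓ B) u) / 2^(m+1)` for some integer `B`, and one of the
two slopes `1 ∓ B` is an integer `c ≥ 1`. For every such `c` the equation `T u = c u` has
infinitely many solutions in `[0, 1]`: for `c = 1` the points `0.(10)^j` (in binary) are fixed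
by `T`, and `T (u / 2) = u / 2 + T u / 2` turns solutions for `c` into solutions for `c + 1`.
-/

open Set MeasureTheory ENNReal

/-- `phi x` is the distance from `x` to the nearest integer. -/
noncomputable def phi (x : ℝ) : ℝ := |x - (round x : ℤ)|

/-- The Takagi function. -/
noncomputable def T (x : ℝ) : ℝ := ∑' n : ℕ, phi (2 ^ n * x) / 2 ^ n

/-- The `n`-th binary digit of `x` (terminating expansion for dyadic rationals). -/
noncomputable def eps (n : ℕ) (x : ℝ) : ℤ := ⌊2 ^ n * x⌋ - 2 * ⌊2 ^ (n - 1) * x⌋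

/-- `D k x = ∑_{j=1}^k (-1)^{ε_j(x)}`, the excess of 0 digits over 1 digits. -/
noncomputable def D (k : ℕ) (x : ℝ) : ℤ := ∑ j ∈ Finset.Icc 1 k, (1 - 2 * eps j x)

/-- The level set of the Takagi function at level `y`. -/
def L (y : ℝ) : Set ℝ := {x | x ∈ Set.Icc (0:ℝ) 1 ∧ T x = y}

/-- `x` is a balanced dyadic rational of order `m`. -/
def BalancedOfOrder (x : ℝ) (m : ℕ) : Prop :=
  x ∈ Set.Ico (0:ℝ) 1 ∧ (∃ k : ℤ, x = (k : ℝ) / 2 ^ (2 * m)) ∧ D (2 * m) x = 0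

/-- The generation of a balanced dyadic rational of order `m`:
the number of indices `1 ≤ j ≤ 2m` with `D j x = 0`. -/
noncomputable def generation (x : ℝ) (m : ℕ) : ℕ :=
  ((Finset.Icc 1 (2 * m)).filter (fun j => D j x = 0)).card

/-- A balanced dyadic rational of order `m` is leading if `D j x ≥ 0` for all `1 ≤ j ≤ 2m`. -/
def Leading (x : ℝ) (m : ℕ) : Prop := ∀ j ∈ Finset.Icc 1 (2 * m), 0 ≤ D j x

/-- The equivalence relation whose classes are the local level sets. -/
def locSetoid : Setoid ℝ where
  r x x' := ∀ n : ℕ, 1 ≤ n → |D n x| = |D n x'|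
  iseqv := ⟨fun _ _ _ => rfl, fun h n hn => (h n hn).symm,
    fun h g n hn => (h n hn).trans (g n hn)⟩

/-- The set of local level sets contained in `L y`: the image of `L y ∩ [0,1)`
under the quotient map of `locSetoid`. -/
def locClasses (y : ℝ) : Set (Quotient locSetoid) :=
  Quotient.mk locSetoid '' (L y ∩ Set.Ico (0:ℝ) 1)

lemma phi_eq_norm (x : ℝ) : phi x = ‖(x : AddCircle (1 : ℝ))‖ := by
  simp [phi, AddCircle.norm_eq]

lemma phi_intCast_add (m : ℤ) (x : ℝ) : phi (m + x) = phi x := by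
  rw [phi_eq_norm, phi_eq_norm, AddCircle.coe_add,
    (AddCircle.coe_eq_zero_iff 1).2 ⟨m, by simp⟩, zero_add]

lemma phi_intCast_sub (m : ℤ) (x : ℝ) : phi (m - x) = phi x := by
  rw [sub_eq_add_neg, phi_intCast_add, phi_eq_norm, phi_eq_norm, AddCircle.coe_neg, norm_neg]

lemma phi_le_half (x : ℝ) : phi x ≤ 1 / 2 := abs_sub_round x

lemma phi_eq_one_sub {y : ℝ} (h0 : 1 / 2 ≤ y) (h1 : y ≤ 1) : phi y = 1 - y := by
  have : round y = 1 := round_eq_iff.2 ⟨by push_cast; linarith, by push_cast; linarith⟩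
  rw [phi, this, Int.cast_one, abs_of_nonpos (by linarith)]
  ring

lemma summable_T (x : ℝ) : Summable fun n : ℕ => phi (2 ^ n * x) / 2 ^ n := by
  refine Summable.of_nonneg_of_le (fun n => by unfold phi; positivity) (fun n => ?_)
    summable_geometric_two
  rw [div_le_iff₀ (by positivity), div_pow, one_pow, div_mul_cancel₀ _ (by positivity)]
  linarith [phi_le_half (2 ^ n * x)]

lemma T_zero : T 0 = 0 := by
  simp [T, phi]

lemma T_one_sub (x : ℝ) : T (1 - x) = T x := by
  unfold T
  congr 1 with n
  rw [mul_one_sub, show (2 : ℝ) ^ n = ((2 ^ n : ℤ) : ℝ) by push_cast; rfl, phi_intCast_sub]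

lemma T_one_add_div_two {t : ℝ} (h0 : 0 ≤ t) (h1 : t ≤ 1) :
    T ((1 + t) / 2) = (1 - t) / 2 + T t / 2 := by
  have shift (n : ℕ) : phi (2 ^ (n + 1) * ((1 + t) / 2)) / 2 ^ (n + 1)
      = phi (2 ^ n * t) / 2 ^ n / 2 := by
    rw [show (2 : ℝ) ^ (n + 1) * ((1 + t) / 2) = ((2 ^ n : ℤ) : ℝ) + 2 ^ n * t by
      push_cast; ring, phi_intCast_add, pow_succ, div_div]
  rw [T, (summable_T _).tsum_eq_zero_add, T, ← tsum_div_const]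
  simp only [shift, pow_zero, one_mul, div_one]
  rw [phi_eq_one_sub (by linarith) (by linarith)]
  ring

lemma T_div_two {t : ℝ} (h0 : 0 ≤ t) (h1 : t ≤ 1) : T (t / 2) = t / 2 + T t / 2 := by
  have h := T_one_add_div_two (t := 1 - t) (by linarith) (by linarith)
  rw [show (1 + (1 - t)) / 2 = 1 - t / 2 by ring, T_one_sub, T_one_sub] at h
  rw [h]; ring

lemma T_one_div_two : T (1 / 2) = 1 / 2 := by
  simpa [T_zero] using T_one_add_div_two (t := 0) le_rfl zero_le_one

lemma T_digit_add_div_two {r : ℕ} (hr : r < 2) {t : ℝ} (h0 : 0 ≤ t) (h1 : t ≤ 1) :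
    T ((r + t) / 2) = (r + (1 - 2 * r) * t + T t) / 2 := by
  interval_cases r
  · rw [Nat.cast_zero, zero_add, T_div_two h0 h1]; ring
  · rw [Nat.cast_one, T_one_add_div_two h0 h1]; ring

lemma exists_affine_T_dyadic_interval (n : ℕ) {k : ℕ} (hk : k < 2 ^ n) :
    ∃ A B : ℤ, ∀ t ∈ Icc (0 : ℝ) 1, T ((k + t) / 2 ^ n) = (A + B * t + T t) / 2 ^ n := by
  induction n generalizing k with
  | zero => exact ⟨0, 0, fun t _ => by simp [show k = 0 by omega]⟩
  | succ n ih =>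
    obtain ⟨q, r, hr, rfl⟩ : ∃ q r, r < 2 ∧ k = 2 * q + r :=
      ⟨k / 2, k % 2, Nat.mod_lt k two_pos, (Nat.div_add_mod k 2).symm⟩
    obtain ⟨A, B, hAB⟩ := ih (k := q) (by omega)
    refine ⟨2 * A + (B + 1) * r, B + 1 - 2 * r, fun t ⟨h0, h1⟩ => ?_⟩
    have hs : (r + t) / 2 ∈ Icc (0 : ℝ) 1 := by
      have : (r : ℝ) ≤ 1 := by exact_mod_cast Nat.le_of_lt_succ hr
      constructor <;> linarith [(Nat.cast_nonneg r : (0 : ℝ) ≤ r)]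
    rw [show ((2 * q + r : ℕ) + t) / (2 : ℝ) ^ (n + 1) = (q + (r + t) / 2) / 2 ^ n by
      push_cast; rw [pow_succ]; ring, hAB _ hs, T_digit_add_div_two hr h0 h1, pow_succ]
    push_cast
    ring

noncomputable def takagiFixedPoint : ℕ → ℝ
  | 0 => 0
  | j + 1 => (2 + takagiFixedPoint j) / 4

lemma takagiFixedPoint_mem_Ico (j : ℕ) : takagiFixedPoint j ∈ Ico (0 : ℝ) (2 / 3) := by
  induction j with
  | zero => norm_num [takagiFixedPoint]
  | succ j ih => constructor <;> simp only [takagiFixedPoint] <;> linarith [ih.1, ih.2]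

lemma strictMono_takagiFixedPoint : StrictMono takagiFixedPoint :=
  strictMono_nat_of_lt_succ fun j => by
    simp only [takagiFixedPoint]; linarith [(takagiFixedPoint_mem_Ico j).2]

lemma T_takagiFixedPoint (j : ℕ) : T (takagiFixedPoint j) = takagiFixedPoint j := by
  induction j with
  | zero => exact T_zero
  | succ j ih =>
    obtain ⟨h0, h1⟩ := takagiFixedPoint_mem_Ico j
    rw [takagiFixedPoint, show (2 + takagiFixedPoint j) / 4 = (1 + takagiFixedPoint j / 2) / 2 by
      ring, T_one_add_div_two (by linarith) (by linarith), T_div_two h0 (by linarith), ih]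
    ring

lemma infinite_setOf_T_eq_mul {c : ℤ} (hc : 1 ≤ c) :
    {u ∈ Icc (0 : ℝ) 1 | T u = c * u}.Infinite := by
  induction c, hc using Int.leInduction with
  | base =>
    refine (infinite_range_of_injective strictMono_takagiFixedPoint.injective).mono ?_
    rintro _ ⟨j, rfl⟩
    obtain ⟨h0, h1⟩ := takagiFixedPoint_mem_Ico j
    exact ⟨⟨h0, by linarith⟩, by rw [T_takagiFixedPoint, Int.cast_one, one_mul]⟩
  | succ c _ ih =>
    refine (ih.image fun a _ b _ (h : a / 2 = b / 2) => by linarith).mono ?_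
    rintro _ ⟨u, ⟨⟨h0, h1⟩, hu⟩, rfl⟩
    refine ⟨⟨by linarith, by linarith⟩, ?_⟩
    rw [T_div_two h0 h1, hu]
    push_cast
    ring

lemma exists_eq_dyadic_midpoint {x : ℝ} (hx0 : 0 < x) (hx1 : x < 1) {k : ℤ} {n : ℕ}
    (hx : x = k / 2 ^ n) : ∃ m q : ℕ, q < 2 ^ m ∧ x = (q + 1 / 2) / 2 ^ m := by
  induction n generalizing k with
  | zero =>
    rw [pow_zero, div_one] at hx
    subst hx
    have : 0 < k := by exact_mod_cast hx0
    have : k < 1 := by exact_mod_cast hx1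
    omega
  | succ n ih =>
    rcases Int.even_or_odd' k with ⟨j, rfl | rfl⟩
    · exact ih (k := j) (by rw [hx, pow_succ]; push_cast; ring)
    · have hxj : x = (j + 1 / 2) / 2 ^ n := by rw [hx, pow_succ]; push_cast; ring
      rw [hxj] at hx0 hx1
      have hj0 : (-1 : ℝ) < j := by linarith [(div_pos_iff_of_pos_right (by positivity)).1 hx0]
      have hj1 : (j : ℝ) < 2 ^ n := by linarith [(div_lt_one (by positivity)).1 hx1]
      have : (-1 : ℤ) < j := by exact_mod_cast hj0
      lift j to ℕ using by omega
      exact ⟨n, j, by exact_mod_cast hj1, hxj⟩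

lemma dyadic_midpoint_add_mem_Icc {m q : ℕ} (hq : q < 2 ^ m) {e : ℝ} (he : |e| ≤ 1) :
    (q + 1 / 2) / 2 ^ m + e / 2 ^ (m + 1) ∈ Icc (0 : ℝ) 1 := by
  have hq' : (q : ℝ) + 1 ≤ 2 ^ m := by exact_mod_cast hq
  obtain ⟨he0, he1⟩ := abs_le.1 he
  rw [show (q + 1 / 2) / 2 ^ m + e / 2 ^ (m + 1) = (q + (1 + e) / 2) / (2 : ℝ) ^ m by
    rw [pow_succ]; ring]
  constructor
  · exact div_nonneg (by linarith [(q.cast_nonneg : (0 : ℝ) ≤ q)]) (by positivity)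
  · rw [div_le_one (by positivity)]; linarith

lemma exists_mem_L_near_dyadic_midpoint {m q : ℕ} (hq : q < 2 ^ m) :
    ∃ B : ℤ, ∀ u ∈ Icc (0 : ℝ) 1,
      (T u = (1 - B) * u →
        (q + 1 / 2) / 2 ^ m + u / 2 ^ (m + 1) ∈ L (T ((q + 1 / 2) / 2 ^ m))) ∧
      (T u = (1 + B) * u →
        (q + 1 / 2) / 2 ^ m - u / 2 ^ (m + 1) ∈ L (T ((q + 1 / 2) / 2 ^ m))) := by
  obtain ⟨A, B, hAB⟩ := exists_affine_T_dyadic_interval m hq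
  have hmid : T ((q + 1 / 2) / 2 ^ m) = (A + B / 2 + 1 / 2) / 2 ^ m := by
    rw [hAB _ ⟨by norm_num, by norm_num⟩, T_one_div_two]; ring
  refine ⟨B, fun u ⟨h0, h1⟩ => ⟨fun hu => ⟨?_, ?_⟩, fun hu => ⟨?_, ?_⟩⟩⟩
  · exact dyadic_midpoint_add_mem_Icc hq (abs_le.2 ⟨by linarith, h1⟩)
  · rw [show (q + 1 / 2) / 2 ^ m + u / 2 ^ (m + 1) = (q + (1 + u) / 2) / (2 : ℝ) ^ m by
      rw [pow_succ]; ring, hAB _ ⟨by linarith, by linarith⟩, T_one_add_div_two h0 h1, hu, hmid]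
    ring
  · rw [sub_eq_add_neg, ← neg_div]
    exact dyadic_midpoint_add_mem_Icc hq (abs_le.2 ⟨by linarith, by linarith⟩)
  · rw [show (q + 1 / 2) / 2 ^ m - u / 2 ^ (m + 1) = (q + (1 - u) / 2) / (2 : ℝ) ^ m by
      rw [pow_succ]; ring, hAB _ ⟨by linarith, by linarith⟩, ← T_one_sub ((1 - u) / 2),
      show 1 - (1 - u) / 2 = (1 + u) / 2 by ring, T_one_add_div_two h0 h1, hu, hmid]
    ring

lemma L_infinite_of_injective {y : ℝ} {c : ℤ} (hc : 1 ≤ c) {f : ℝ → ℝ} (hf : f.Injective)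
    (h : ∀ u ∈ Icc (0 : ℝ) 1, T u = c * u → f u ∈ L y) : (L y).Infinite :=
  ((infinite_setOf_T_eq_mul hc).image hf.injOn).mono <| by
    rintro _ ⟨u, ⟨hu, hTu⟩, rfl⟩
    exact h u hu hTu

theorem stmt2 (x : ℝ) (hx0 : 0 < x) (hx1 : x < 1)
    (hdyadic : ∃ (k : ℤ) (n : ℕ), x = (k : ℝ) / 2 ^ n) :
    (L (T x)).Infinite := by
  obtain ⟨k, n, hx⟩ := hdyadic
  obtain ⟨m, q, hq, rfl⟩ := exists_eq_dyadic_midpoint hx0 hx1 hx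
  obtain ⟨B, hB⟩ := exists_mem_L_near_dyadic_midpoint hq
  have hpow : (2 : ℝ) ^ (m + 1) ≠ 0 := by positivity
  rcases le_total B 0 with hB0 | hB0
  · refine L_infinite_of_injective (c := 1 - B) (by omega)
      (f := fun u => (q + 1 / 2) / 2 ^ m + u / 2 ^ (m + 1))
      (fun a b h => by simpa [hpow] using h)
      fun u hu hTu => (hB u hu).1 (by rw [hTu]; push_cast; ring)
  · refine L_infinite_of_injective (c := 1 + B) (by omega)
      (f := fun u => (q + 1 / 2) / 2 ^ m - u / 2 ^ (m + 1))
      (fun a b h => by simpa [hpow] using h)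
      fun u hu hTu => (hB u hu).2 (by rw [hTu]; push_cast; ring)
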